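/- In the RandGreeDi algorithm with m machines, for each machine i, the expected value of the greedy solution S_i computed on machine i's random subset satisfies E[f(S_i)] ≥ α · f⁻(𝟙_OPT − p), where α is the approximation ratio of Greedy, p_e = Pr_{A~V(1/m)}[e ∈ Greedy(A ∪ {e})] for e ∈ OPT and p_e = 0 otherwise. -/

import Mathlib

open MeasureTheory Finset

/-- A set function is submodular. -/
def Submodular {V : Type*} [DecidableEq V] (f : Finset V → ℝ) : Prop :=
  ∀ A B : Finset V, f (A ∪ B) + f (A ∩ B) ≤ f A + f B

/-- The Lovász extension: expectation over a uniform threshold θ ∈ (0,1). -/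
noncomputable def lovasz {V : Type*} [Fintype V] [DecidableEq V]
    (f : Finset V → ℝ) (x : V → ℝ) : ℝ :=
  ∫ θ in Set.Ioo (0:ℝ) 1, f (Finset.univ.filter (fun i => θ ≤ x i))

/-- Characteristic vector of a finite set. -/
def charVec {V : Type*} [DecidableEq V] (S : Finset V) : V → ℝ :=
  fun i => if i ∈ S then 1 else 0
/-- One pass of the standard greedy algorithm with fuel `n`: at each step add the
feasible element of `X` with maximum nonnegative marginal gain, breaking ties by
the fixed linear order on `V` (choosing the least maximizer). -/
noncomputable def greedyAux {V : Type*} [Fintype V] [DecidableEq V] [LinearOrder V]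
    (f : Finset V → ℝ) (I : Finset V → Prop) [DecidablePred I]
    (X : Finset V) : ℕ → Finset V → Finset V
  | 0, S => S
  | (n+1), S =>
    let C := (X \ S).filter (fun e => I (insert e S) ∧ 0 ≤ f (insert e S) - f S)
    let M := C.filter (fun e => ∀ e' ∈ C, f (insert e' S) - f S ≤ f (insert e S) - f S)
    if h : M.Nonempty then greedyAux f I X n (insert (M.min' h) S) else S

/-- The standard greedy algorithm on ground set `X`. -/
noncomputable def greedy {V : Type*} [Fintype V] [DecidableEq V] [LinearOrder V]
    (f : Finset V → ℝ) (I : Finset V → Prop) [DecidablePred I]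
    (X : Finset V) : Finset V :=
  greedyAux f I X (Fintype.card V) ∅
/-- Expectation of `g` over a uniformly random assignment of elements to `m` machines. -/
noncomputable def expAssign {V : Type*} [Fintype V] [DecidableEq V] (m : ℕ) (g : (V → Fin m) → ℝ) : ℝ :=
  (∑ σ : V → Fin m, g σ) / (Fintype.card (V → Fin m) : ℝ)

/-- The set of elements assigned to machine `i` by the assignment `σ`. -/
def machineSet {V : Type*} [Fintype V] [DecidableEq V] {m : ℕ}
    (σ : V → Fin m) (i : Fin m) : Finset V :=
  Finset.univ.filter (fun e => σ e = i)

/-!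
By localization, the elements of `OPT` that greedy rejects on `A ∪ {e}` can all be added to `A`
without changing `greedy A`; they form a feasible set, so `α · f (rejected) ≤ f (greedy A)` for
every assignment. The vector `𝟙_OPT − p` is the mean, over assignments, of the indicator vectors
of the rejected sets, and at such a mean of `N` indicator vectors the Lovász extension is the
average of the `N` level sets of the cover count. Merging one set at a time into this chain of
level sets, one submodularity step per level shows that the level sets cost at most the sets
themselves.
-/

section Greedy

variable {V : Type*} [DecidableEq V] (f : Finset V → ℝ) (I : Finset V → Prop) [DecidablePred I]

noncomputable def greedyCandidates (X S : Finset V) : Finset V :=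
  (X \ S).filter fun e => I (insert e S) ∧ 0 ≤ f (insert e S) - f S

variable {f I} in
lemma greedyCandidates_mono {A X : Finset V} (hAX : A ⊆ X) (S : Finset V) :
    greedyCandidates f I A S ⊆ greedyCandidates f I X S :=
  filter_subset_filter _ (sdiff_subset_sdiff hAX subset_rfl)

variable [Fintype V]

noncomputable def greedyMaximizers (X S : Finset V) : Finset V :=
  (greedyCandidates f I X S).filter
    fun e => ∀ e' ∈ greedyCandidates f I X S, f (insert e' S) - f S ≤ f (insert e S) - f S

variable {f I}

lemma greedyMaximizers_eq_empty_iff {X S : Finset V} :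
    greedyMaximizers f I X S = ∅ ↔ greedyCandidates f I X S = ∅ := by
  refine ⟨fun h => ?_, fun h => subset_empty.1 (h ▸ filter_subset _ _)⟩
  by_contra hne
  obtain ⟨b, hb, hmax⟩ := exists_max_image _ (fun e => f (insert e S) - f S)
    (nonempty_iff_ne_empty.2 hne)
  exact (eq_empty_iff_forall_notMem.1 h) b (mem_filter.2 ⟨hb, hmax⟩)

lemma greedyMaximizers_eq_empty_of_subset {A X S : Finset V} (hAX : A ⊆ X)
    (h : greedyMaximizers f I X S = ∅) : greedyMaximizers f I A S = ∅ := by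
  rw [greedyMaximizers_eq_empty_iff] at h ⊢
  exact subset_empty.1 (h ▸ greedyCandidates_mono hAX S)

lemma greedyMaximizers_of_subset {A X S : Finset V} {m : V} (hAX : A ⊆ X)
    (hm : m ∈ greedyMaximizers f I X S) (hmA : m ∈ A) :
    m ∈ greedyMaximizers f I A S ∧ greedyMaximizers f I A S ⊆ greedyMaximizers f I X S := by
  obtain ⟨hmX, hmax⟩ := mem_filter.1 hm
  have hmC : m ∈ greedyCandidates f I A S := by
    obtain ⟨hmXS, hfeas⟩ := mem_filter.1 hmX
    exact mem_filter.2 ⟨mem_sdiff.2 ⟨hmA, (mem_sdiff.1 hmXS).2⟩, hfeas⟩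
  refine ⟨mem_filter.2 ⟨hmC, fun e' he' => hmax e' (greedyCandidates_mono hAX S he')⟩,
    fun e he => ?_⟩
  obtain ⟨heA, hemax⟩ := mem_filter.1 he
  exact mem_filter.2 ⟨greedyCandidates_mono hAX S heA,
    fun e' he' => (hmax e' he').trans (hemax m hmC)⟩

variable [LinearOrder V]

lemma greedyMaximizers_min_of_subset {A X S : Finset V} {m : V} (hAX : A ⊆ X)
    (hm : (greedyMaximizers f I X S).min = m) (hmA : m ∈ A) :
    (greedyMaximizers f I A S).min = m := by
  obtain ⟨hmem, hsub⟩ := greedyMaximizers_of_subset hAX (mem_of_min hm) hmA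
  exact le_antisymm (min_le hmem) (hm ▸ min_mono hsub)

lemma greedyAux_succ (X S : Finset V) (n : ℕ) :
    greedyAux f I X (n + 1) S =
      if h : (greedyMaximizers f I X S).Nonempty then
        greedyAux f I X n (insert ((greedyMaximizers f I X S).min' h) S)
      else S := rfl

lemma greedyAux_succ_of_min_eq {X S : Finset V} {m : V} (n : ℕ)
    (h : (greedyMaximizers f I X S).min = m) :
    greedyAux f I X (n + 1) S = greedyAux f I X n (insert m S) := by
  have hne : (greedyMaximizers f I X S).Nonempty := ⟨m, mem_of_min h⟩
  rw [greedyAux_succ, dif_pos hne, WithTop.coe_injective ((coe_min' hne).trans h)]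

lemma greedyAux_succ_of_eq_empty {X S : Finset V} (n : ℕ)
    (h : greedyMaximizers f I X S = ∅) : greedyAux f I X (n + 1) S = S := by
  rw [greedyAux_succ, dif_neg (not_nonempty_iff_eq_empty.2 h)]

lemma subset_greedyAux (X : Finset V) (n : ℕ) (S : Finset V) : S ⊆ greedyAux f I X n S := by
  induction n generalizing S with
  | zero => exact subset_rfl
  | succ n ih =>
    rw [greedyAux_succ]
    split
    · exact (subset_insert _ _).trans (ih _)
    · exact subset_rfl

lemma greedyAux_union_eq (n : ℕ) {A B S : Finset V}
    (hB : ∀ e ∈ B, e ∉ greedyAux f I (insert e A) n S) :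
    greedyAux f I (A ∪ B) n S = greedyAux f I A n S := by
  induction n generalizing S with
  | zero => rfl
  | succ n ih =>
    obtain hempty | ⟨m, hm⟩ := (greedyMaximizers f I (A ∪ B) S).eq_empty_or_nonempty.imp_right
      min_of_nonempty
    · rw [greedyAux_succ_of_eq_empty n hempty,
        greedyAux_succ_of_eq_empty n (greedyMaximizers_eq_empty_of_subset subset_union_left hempty)]
    have hmA : m ∈ A := by
      by_contra hmA
      have hmB : m ∈ B := by
        have hmC := filter_subset _ _ (mem_of_min hm)
        exact (mem_union.1 (mem_sdiff.1 (mem_filter.1 hmC).1).1).resolve_left hmA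
      apply hB m hmB
      rw [greedyAux_succ_of_min_eq n (greedyMaximizers_min_of_subset
        (insert_subset (mem_union_right _ hmB) subset_union_left) hm (mem_insert_self m A))]
      exact subset_greedyAux _ _ _ (mem_insert_self m S)
    rw [greedyAux_succ_of_min_eq n hm,
      greedyAux_succ_of_min_eq n (greedyMaximizers_min_of_subset subset_union_left hm hmA)]
    refine ih fun e he => ?_
    have hrej := hB e he
    rwa [greedyAux_succ_of_min_eq n (greedyMaximizers_min_of_subset
      (insert_subset (mem_union_right _ he) subset_union_left) hm (mem_insert_of_mem hmA))] at hrej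

theorem greedy_union_eq (A B : Finset V) (hB : ∀ e ∈ B, e ∉ greedy f I (insert e A)) :
    greedy f I (A ∪ B) = greedy f I A :=
  greedyAux_union_eq _ hB

theorem mul_le_greedy_of_rejected (hher : ∀ A B : Finset V, A ⊆ B → I B → I A) {α : ℝ}
    (happrox : ∀ V' O : Finset V, O ⊆ V' → I O → α * f O ≤ f (greedy f I V'))
    {O : Finset V} (hO : I O) (A : Finset V) :
    α * f (O.filter fun e => e ∉ greedy f I (insert e A)) ≤ f (greedy f I A) := by
  rw [← greedy_union_eq A _ fun e he => (mem_filter.1 he).2]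
  exact happrox _ _ subset_union_right (hher _ _ (filter_subset _ _) hO)

end Greedy

section LevelSets

variable {V ι : Type*} [DecidableEq V]

lemma Submodular.sum_union_inter_chain_le {f : Finset V → ℝ} (hf : Submodular f)
    {M : ℕ → Finset V} (hM : Antitone M) (S : Finset V) (n : ℕ) :
    ∑ k ∈ range n, f (M (k + 1) ∪ (S ∩ M k)) + f (S ∩ M n) ≤
      f (S ∩ M 0) + ∑ k ∈ range n, f (M (k + 1)) := by
  induction n with
  | zero => simp
  | succ n ih =>
    have hstep := hf (S ∩ M n) (M (n + 1))
    rw [union_comm, inter_assoc, inter_eq_right.2 (hM n.le_succ)] at hstep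
    rw [sum_range_succ, sum_range_succ]
    linarith

variable [Fintype V]

def coverLevel (T : ι → Finset V) (s : Finset ι) (k : ℕ) : Finset V :=
  {e | k ≤ #{j ∈ s | e ∈ T j}}

lemma coverLevel_zero (T : ι → Finset V) (s : Finset ι) : coverLevel T s 0 = univ := by
  simp [coverLevel]

lemma coverLevel_antitone (T : ι → Finset V) (s : Finset ι) : Antitone (coverLevel T s) :=
  fun _ _ hkl _ he => mem_filter.2 ⟨mem_univ _, hkl.trans (mem_filter.1 he).2⟩

lemma coverLevel_card_add_one (T : ι → Finset V) (s : Finset ι) :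
    coverLevel T s (#s + 1) = ∅ :=
  filter_false_of_mem fun e _ => by
    have := card_filter_le s (e ∈ T ·)
    omega

lemma coverLevel_insert [DecidableEq ι] (T : ι → Finset V) {s : Finset ι} {j : ι} (hj : j ∉ s)
    (k : ℕ) :
    coverLevel T (insert j s) (k + 1) = coverLevel T s (k + 1) ∪ (T j ∩ coverLevel T s k) := by
  ext e
  have hjs : j ∉ {j ∈ s | e ∈ T j} := fun h => hj (mem_filter.1 h).1
  by_cases he : e ∈ T j
  · simp [coverLevel, filter_insert, he, card_insert_of_notMem hjs]
    omega
  · simp [coverLevel, filter_insert, he]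

theorem Submodular.sum_coverLevel_le [DecidableEq ι] {f : Finset V → ℝ} (hf : Submodular f)
    (T : ι → Finset V) (s : Finset ι) :
    ∑ k ∈ range #s, f (coverLevel T s (k + 1)) ≤ ∑ j ∈ s, f (T j) := by
  induction s using Finset.induction_on with
  | empty => simp
  | insert j s hj ih =>
    have hchain := hf.sum_union_inter_chain_le (coverLevel_antitone T s) (T j) #s
    rw [coverLevel_zero, inter_univ] at hchain
    rw [card_insert_of_notMem hj, sum_range_succ, sum_insert hj, coverLevel_insert T hj,
      coverLevel_card_add_one, empty_union]
    simp only [coverLevel_insert T hj]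
    linarith

end LevelSets

section Lovasz

variable {V : Type*} [Fintype V] [DecidableEq V]

lemma le_natCast_div_iff {N k c : ℕ} (hN : 0 < N) {θ : ℝ}
    (hθ : θ ∈ Set.Ioc ((k : ℝ) / N) ((k + 1 : ℕ) / N)) : θ ≤ (c : ℝ) / N ↔ k + 1 ≤ c := by
  have hNR : (0 : ℝ) < N := Nat.cast_pos.2 hN
  constructor
  · intro h
    have hkc : (k : ℝ) < c := (div_lt_div_iff_of_pos_right hNR).1 (hθ.1.trans_le h)
    exact_mod_cast hkc
  · intro h
    exact hθ.2.trans (by gcongr)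

theorem lovasz_natCast_div (f : Finset V → ℝ) (c : V → ℕ) {N : ℕ} (hN : 0 < N) :
    lovasz f (fun e => (c e : ℝ) / N) = (∑ k ∈ range N, f {e | k + 1 ≤ c e}) / N := by
  set g : ℝ → ℝ := fun θ => f {e | θ ≤ (c e : ℝ) / N}
  set a : ℕ → ℝ := fun k => (k : ℝ) / N
  have hmono (k : ℕ) : a k ≤ a (k + 1) := by
    simp only [a]
    gcongr
    simp
  have hconst (k : ℕ) : Set.EqOn g (fun _ => f {e | k + 1 ≤ c e}) (Set.uIoc (a k) (a (k + 1))) :=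
    fun θ hθ => by
      rw [Set.uIoc_of_le (hmono k)] at hθ
      simp only [g, le_natCast_div_iff hN hθ]
  have hpiece (k : ℕ) : ∫ θ in a k..a (k + 1), g θ = f {e | k + 1 ≤ c e} / N := by
    rw [intervalIntegral.integral_congr_ae (ae_of_all _ (hconst k)),
      intervalIntegral.integral_const, smul_eq_mul]
    simp only [a]
    field_simp
    push_cast
    ring
  have hint (k : ℕ) : IntervalIntegrable g volume (a k) (a (k + 1)) :=
    intervalIntegrable_const.congr (hconst k).symm
  have ha0 : a 0 = 0 := by simp [a]
  have haN : a N = 1 := div_self (Nat.cast_pos.2 hN).ne'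
  rw [lovasz, ← integral_Ioc_eq_integral_Ioo, ← intervalIntegral.integral_of_le zero_le_one,
    ← ha0, ← haN, ← intervalIntegral.sum_integral_adjacent_intervals fun k _ => hint k, sum_div]
  exact sum_congr rfl fun k _ => hpiece k

theorem Submodular.lovasz_average_le {ι : Type*} [Fintype ι] [DecidableEq ι] [Nonempty ι]
    {f : Finset V → ℝ} (hf : Submodular f) (T : ι → Finset V) :
    lovasz f (fun e => (∑ j, charVec (T j) e) / Fintype.card ι) ≤
      (∑ j, f (T j)) / Fintype.card ι := by
  have hcount (e : V) : ∑ j, charVec (T j) e = (#{j | e ∈ T j} : ℝ) := by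
    simp only [charVec, sum_boole]
  simp only [hcount, lovasz_natCast_div f _ Fintype.card_pos]
  gcongr
  have hlevels := hf.sum_coverLevel_le T univ
  rw [card_univ] at hlevels
  exact hlevels

end Lovasz

lemma expAssign_one_sub {V : Type*} [Fintype V] [DecidableEq V] {m : ℕ} [Nonempty (V → Fin m)]
    (g : (V → Fin m) → ℝ) : expAssign m (fun σ => 1 - g σ) = 1 - expAssign m g := by
  have hcard : (Fintype.card (V → Fin m) : ℝ) ≠ 0 := Nat.cast_ne_zero.2 Fintype.card_ne_zero
  simp only [expAssign, sum_sub_distrib, sum_const, card_univ, nsmul_eq_mul, mul_one, sub_div,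
    div_self hcard]

theorem randgreedi_single_machine_general {V : Type*} [Fintype V] [DecidableEq V] [LinearOrder V]
    (f : Finset V → ℝ) (I : Finset V → Prop) [DecidablePred I]
    (hsub : Submodular f)
    (hher : ∀ A B : Finset V, A ⊆ B → I B → I A)
    (α : ℝ) (hα : 0 < α)
    (happrox : ∀ V' O : Finset V, O ⊆ V' → I O → α * f O ≤ f (greedy f I V'))
    (m : ℕ) (OPT : Finset V) (hOPT : I OPT) (i : Fin m) :
    α * lovasz f (fun e => charVec OPT e -
        (if e ∈ OPT then
          expAssign m (fun σ =>
            if e ∈ greedy f I (insert e (machineSet σ i)) then 1 else 0)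
         else 0))
      ≤ expAssign m (fun σ => f (greedy f I (machineSet σ i))) := by
  set rejected : (V → Fin m) → Finset V :=
    fun σ => OPT.filter fun e => e ∉ greedy f I (insert e (machineSet σ i))
  have : Nonempty (V → Fin m) := ⟨fun _ => i⟩
  have hvec : (fun e => charVec OPT e -
      (if e ∈ OPT then
        expAssign m (fun σ => if e ∈ greedy f I (insert e (machineSet σ i)) then 1 else 0)
       else 0)) = fun e => expAssign m fun σ => charVec (rejected σ) e := by
    funext e
    by_cases he : e ∈ OPT
    · simp only [charVec, rejected, mem_filter, he, true_and, if_true, ite_not, ← expAssign_one_sub]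
      congr 1
      funext σ
      split_ifs <;> norm_num
    · simp [charVec, rejected, he, expAssign]
  calc α * lovasz f _
      = α * lovasz f (fun e => expAssign m fun σ => charVec (rejected σ) e) := by rw [hvec]
    _ ≤ α * expAssign m (fun σ => f (rejected σ)) :=
        mul_le_mul_of_nonneg_left (hsub.lovasz_average_le rejected) hα.le
    _ = expAssign m (fun σ => α * f (rejected σ)) := by
        unfold expAssign
        rw [← mul_sum, mul_div_assoc]
    _ ≤ expAssign m (fun σ => f (greedy f I (machineSet σ i))) := by
        unfold expAssign
        gcongr with σ
        exact mul_le_greedy_of_rejected hher happrox hOPT _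

/-- Lemma 3: expected value of the first-round greedy solution on each machine. -/
theorem randgreedi_single_machine {V : Type*} [Fintype V] [DecidableEq V] [LinearOrder V]
    (f : Finset V → ℝ) (I : Finset V → Prop) [DecidablePred I]
    (hsub : Submodular f) (hmono : ∀ A B : Finset V, A ⊆ B → f A ≤ f B)
    (hnn : ∀ A : Finset V, 0 ≤ f A)
    (hher : ∀ A B : Finset V, A ⊆ B → I B → I A) (hempty : I ∅)
    (α : ℝ) (hα : 0 < α)
    (happrox : ∀ V' O : Finset V, O ⊆ V' → I O → α * f O ≤ f (greedy f I V'))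
    (m : ℕ) (OPT : Finset V) (hOPT : I OPT) (i : Fin m) :
    α * lovasz f (fun e => charVec OPT e -
        (if e ∈ OPT then
          expAssign m (fun σ =>
            if e ∈ greedy f I (insert e (machineSet σ i)) then 1 else 0)
         else 0))
      ≤ expAssign m (fun σ => f (greedy f I (machineSet σ i))) :=
  randgreedi_single_machine_general f I hsub hher α hα happrox m OPT hOPT i
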